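/- Let L/K be a finite Galois extension of degree n with Galois group G = {σ₁, …, σ_n}. For b₁, …, b_n ∈ L define the K-bilinear form f_{b₁,…,b_n}: L × L → K by f_{b₁,…,b_n}(x,y) = Tr^L_K((b₁σ₁(x) + ⋯ + b_nσ_n(x))y). Then the K-linear map L^n → Bil(L) sending (b₁, …, b_n) to f_{b₁,…,b_n} is surjective (indeed an isomorphism), so every K-bilinear form on L arises in this way; moreover, setting B_i = {f_{b,σ_i} : b ∈ L} where f_{b,σ_i}(x,y) = Tr^L_K(bσ_i(x)y), one has Bil(L) = B₁ ⊕ ⋯ ⊕ B_n, where each B_i has K-dimension n and every nonzero element of each B_i is non-degenerate. -/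

import Mathlib

/-!
Since the trace form is nondegenerate, `f_{b₁,…,b_n} = 0` means `∑ bᵢ σᵢ = 0` as a map `L → L`,
so `b = 0` by Dedekind's independence of characters. As `dim_K Lⁿ = n² = dim_K Bil(L)`, the
injective map `b ↦ f_b` is bijective. It is the sum of the maps `b ↦ f_{b,σᵢ}`, so these are
injective with independent ranges `Bᵢ` spanning `Bil(L)`. Finally `f_{b,σ}(x, ·) = 0` means
`b σ(x) = 0`, again by nondegeneracy of the trace form.
-/

variable {K L : Type*} [Field K] [Field L] [Algebra K L]

/-- The bilinear form `f_{b,σ}(x,y) = Tr^L_K (b * σ x * y)`. -/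
noncomputable def galoisBilForm (b : L) (σ : L ≃ₐ[K] L) : (L →ₗ[K] L →ₗ[K] K) :=
  LinearMap.mk₂ K (fun x y => Algebra.trace K L (b * σ x * y))
    (fun x x' y => by
      try dsimp only
      rw [show b * σ (x + x') * y = b * σ x * y + b * σ x' * y by
          rw [map_add σ]; ring, map_add])
    (fun a x y => by
      try dsimp only
      rw [show b * σ (a • x) * y = a • (b * σ x * y) by
          rw [map_smul σ]; simp only [smul_mul_assoc, mul_smul_comm], map_smul])
    (fun x y y' => by
      try dsimp only
      rw [show b * σ x * (y + y') = b * σ x * y + b * σ x * y' by ring, map_add])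
    (fun a x y => by
      try dsimp only
      rw [show b * σ x * (a • y) = a • (b * σ x * y) by
          simp only [smul_mul_assoc, mul_smul_comm], map_smul])

/-- `b ↦ f_{b,σ}` as a `K`-linear map. -/
noncomputable def galoisBilFormL (σ : L ≃ₐ[K] L) : L →ₗ[K] (L →ₗ[K] L →ₗ[K] K) where
  toFun b := galoisBilForm b σ
  map_add' b b' := by
    ext x y
    simp only [galoisBilForm, LinearMap.mk₂_apply, LinearMap.add_apply]
    rw [← map_add]; ring_nf
  map_smul' a b := by
    ext x y
    simp only [galoisBilForm, LinearMap.mk₂_apply, LinearMap.smul_apply, RingHom.id_apply]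
    rw [← map_smul]; simp only [smul_mul_assoc]

/-- The `K`-linear map `Lⁿ → Bil(L)`,
`(b₁,…,b_n) ↦ ((x,y) ↦ Tr((b₁σ₁(x) + ⋯ + b_nσ_n(x))y))`. -/
noncomputable def phiBil (n : ℕ) (σ : Fin n → (L ≃ₐ[K] L)) :
    (Fin n → L) →ₗ[K] (L →ₗ[K] L →ₗ[K] K) :=
  ∑ i, (galoisBilFormL (σ i)).comp (LinearMap.proj i)

section SumOfMaps

variable {ι M N : Type*} [Fintype ι] [AddCommMonoid M] [AddCommMonoid N]

theorem LinearMap.injective_of_injective_sum_comp_proj {R : Type*} [Semiring R] [Module R M]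
    [Module R N] [DecidableEq ι] (f : ι → M →ₗ[R] N)
    (hf : Function.Injective (∑ i, (f i).comp (LinearMap.proj i) : (ι → M) →ₗ[R] N)) (i : ι) :
    Function.Injective (f i) := by
  have hcomp :
      (∑ j, (f j).comp (LinearMap.proj j)).comp (LinearMap.single R (fun _ => M) i) = f i := by
    ext c
    simp only [LinearMap.comp_apply, LinearMap.sum_apply, LinearMap.proj_apply,
      LinearMap.single_apply]
    rw [Fintype.sum_eq_single i fun j hj => by rw [Pi.single_eq_of_ne hj, map_zero],
      Pi.single_eq_same]
  rw [← hcomp, LinearMap.coe_comp, LinearMap.coe_single]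
  exact hf.comp (Pi.single_injective i)

theorem LinearMap.iSupIndep_range_of_injective_sum_comp_proj {R : Type*} [Ring R] [Module R M]
    [Module R N] (f : ι → M →ₗ[R] N)
    (hf : Function.Injective (∑ i, (f i).comp (LinearMap.proj i) : (ι → M) →ₗ[R] N)) :
    iSupIndep fun i => LinearMap.range (f i) := by
  classical
  -- over a ring, `N` is an additive group, as the criterion for independence below requires
  let := Module.addCommMonoidToAddCommGroup R (M := N)
  rw [iSupIndep_iff_finsetSum_eq_zero_imp_eq_zero]
  intro s v hv hv0 i hi
  have hpre : ∀ j, ∃ c, f j c = if j ∈ s then v j else 0 := by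
    intro j
    split_ifs with hj
    · exact hv j hj
    · exact ⟨0, map_zero _⟩
  choose b hb using hpre
  have hb0 : b = 0 := by
    apply hf
    simp only [LinearMap.sum_apply, LinearMap.comp_apply, LinearMap.proj_apply, hb,
      Finset.sum_ite_mem, Finset.univ_inter, map_zero]
    exact hv0
  simpa [hi, hb0] using (hb i).symm

theorem LinearMap.iSup_range_eq_top_of_surjective_sum_comp_proj {R : Type*} [Semiring R]
    [Module R M] [Module R N] (f : ι → M →ₗ[R] N)
    (hf : Function.Surjective (∑ i, (f i).comp (LinearMap.proj i) : (ι → M) →ₗ[R] N)) :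
    ⨆ i, LinearMap.range (f i) = ⊤ := by
  refine eq_top_iff.mpr fun y _ => ?_
  obtain ⟨b, rfl⟩ := hf y
  simp only [LinearMap.sum_apply, LinearMap.comp_apply, LinearMap.proj_apply]
  exact Submodule.sum_mem _ fun i _ => Submodule.mem_iSup_of_mem i ⟨b i, rfl⟩

end SumOfMaps

theorem eq_zero_of_forall_trace_mul_eq_zero [FiniteDimensional K L] [Algebra.IsSeparable K L]
    {a : L} (h : ∀ y, Algebra.trace K L (a * y) = 0) : a = 0 :=
  (traceForm_nondegenerate K L).1 a h

theorem galoisBilForm_apply (b : L) (σ : L ≃ₐ[K] L) (x y : L) :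
    galoisBilForm b σ x y = Algebra.trace K L (b * σ x * y) :=
  rfl

theorem phiBil_apply (n : ℕ) (σ : Fin n → (L ≃ₐ[K] L)) (b : Fin n → L) (x y : L) :
    phiBil n σ b x y = Algebra.trace K L ((∑ i, b i * σ i x) * y) := by
  simp [phiBil, galoisBilFormL, galoisBilForm, Finset.sum_mul, map_sum]

theorem ker_galoisBilForm_eq_bot [FiniteDimensional K L] [Algebra.IsSeparable K L]
    {b : L} (hb : b ≠ 0) (σ : L ≃ₐ[K] L) : LinearMap.ker (galoisBilForm b σ) = ⊥ := by
  refine LinearMap.ker_eq_bot'.mpr fun x hx => ?_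
  have hbσx : b * σ x = 0 :=
    eq_zero_of_forall_trace_mul_eq_zero fun y => by
      rw [← galoisBilForm_apply, hx, LinearMap.zero_apply]
  simpa [hb] using hbσx

theorem phiBil_injective [FiniteDimensional K L] [Algebra.IsSeparable K L]
    (n : ℕ) (σ : Fin n → (L ≃ₐ[K] L)) (hσ : Function.Injective σ) :
    Function.Injective (phiBil n σ) := by
  refine (injective_iff_map_eq_zero _).mpr fun b hb => ?_
  have hsum : ∀ x : L, ∑ i, b i * σ i x = 0 := fun x =>
    eq_zero_of_forall_trace_mul_eq_zero fun y => by
      rw [← phiBil_apply, hb, LinearMap.zero_apply, LinearMap.zero_apply]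
  have hchar : Function.Injective fun i => ((σ i : L →ₐ[K] L) : L →* L) :=
    fun i j h => hσ (AlgEquiv.ext fun x => DFunLike.congr_fun h x)
  refine funext (Fintype.linearIndependent_iff.mp
    ((linearIndependent_monoidHom L L).comp _ hchar) b ?_)
  funext x
  simpa using hsum x

/-- for a Galois extension of degree `n` with Galois group enumerated as
`σ₁, …, σ_n`, the map `(b₁,…,b_n) ↦ f_{b₁,…,b_n}` is a `K`-isomorphism of `Lⁿ` onto
`Bil(L)`; moreover `Bil(L) = B₁ ⊕ ⋯ ⊕ B_n` where `Bᵢ = {f_{b,σᵢ} : b ∈ L}` has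
dimension `n` and all its nonzero elements are non-degenerate. -/
theorem statement18 [FiniteDimensional K L] [IsGalois K L]
    (n : ℕ) (hn : Module.finrank K L = n)
    (σ : Fin n → (L ≃ₐ[K] L)) (henum : Function.Bijective σ) :
    Function.Bijective (phiBil n σ) ∧
    iSupIndep (fun i => LinearMap.range (galoisBilFormL (σ i))) ∧
    (⨆ i, LinearMap.range (galoisBilFormL (σ i))) = ⊤ ∧
    (∀ i, Module.finrank K (LinearMap.range (galoisBilFormL (σ i))) = n) ∧
    (∀ i, ∀ f ∈ LinearMap.range (galoisBilFormL (σ i)), f ≠ 0 →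
      LinearMap.ker f = ⊥) := by
  have hinj := phiBil_injective n σ henum.1
  have hdim : Module.finrank K (Fin n → L) = Module.finrank K (L →ₗ[K] L →ₗ[K] K) := by
    simp [Module.finrank_pi_fintype, Module.finrank_linearMap, hn]
  have hsurj := (LinearMap.injective_iff_surjective_of_finrank_eq_finrank (V := Fin n → L)
    (V₂ := L →ₗ[K] L →ₗ[K] K) hdim).mp hinj
  refine ⟨⟨hinj, hsurj⟩, LinearMap.iSupIndep_range_of_injective_sum_comp_proj _ hinj,
    LinearMap.iSup_range_eq_top_of_surjective_sum_comp_proj _ hsurj, fun i => ?_, ?_⟩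
  · rw [LinearMap.finrank_range_of_inj
      (LinearMap.injective_of_injective_sum_comp_proj _ hinj i), hn]
  · rintro i f ⟨b, rfl⟩ hf
    exact ker_galoisBilForm_eq_bot (fun hb => hf (by rw [hb, map_zero])) (σ i)
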